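/- arXiv:1204.0214 — 9 statements merged into one kernel-verified Lean document; each statement's English description precedes it below -/
import Mathlib

section
/- Let V be a finite-dimensional vector space over an infinite field and U₁, ..., U_ℓ a finite family of subspaces. Then there exists a subspace U of V of codimension m = min{dim U_j : 1 ≤ j ≤ ℓ} such that U is a complement to every U_j (i.e., U + U_j = V for all j); moreover no simultaneous complement of codimension strictly greater than m exists. -/
/-- Over an infinite field, a vector space is not a finite union of proper subspaces. -/
lemma avoid_finset {F D : Type*} [Field F] [Infinite F] [AddCommGroup D] [Module F D]
    (s : Finset (Submodule F D)) (hs : ∀ p ∈ s, p ≠ ⊤) :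
    ∃ v : D, ∀ p ∈ s, v ∉ p := by
  classical
  induction s using Finset.cons_induction with
  | empty => exact ⟨0, by simp⟩
  | cons q s' hq ih =>
    obtain ⟨v, hv⟩ := ih (fun p hp => hs p (Finset.mem_cons_of_mem hp))
    by_cases hvq : v ∉ q
    · exact ⟨v, by
        intro p hp
        rcases Finset.mem_cons.mp hp with rfl | hp
        · exact hvq
        · exact hv p hp⟩
    push_neg at hvq
    have hqt : q ≠ ⊤ := hs q (Finset.mem_cons_self _ _)
    obtain ⟨w, hw⟩ : ∃ w : D, w ∉ q := by
      by_contra h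
      push_neg at h
      exact hqt (Submodule.eq_top_iff'.mpr h)
    -- bad set of scalars
    have hbadp : ∀ p ∈ s', {c : F | v + c • w ∈ p}.Subsingleton := by
      intro p hp c₁ hc₁ c₂ hc₂
      by_contra hne
      have hsub : (c₁ - c₂) • w ∈ p := by
        have := p.sub_mem hc₁ hc₂
        simpa [sub_smul] using (by simpa [add_sub_add_left_eq_sub] using this)
      have hwp : w ∈ p := by
        have h1 : (c₁ - c₂)⁻¹ • ((c₁ - c₂) • w) ∈ p := p.smul_mem _ hsub
        rwa [smul_smul, inv_mul_cancel₀ (sub_ne_zero.mpr hne), one_smul] at h1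
      have hvp : v ∈ p := by
        have := p.sub_mem hc₁ (p.smul_mem c₁ hwp)
        simpa using this
      exact hv p hp hvp
    have hfin : (⋃ p ∈ (s' : Set (Submodule F D)), {c : F | v + c • w ∈ p}).Finite :=
      Set.Finite.biUnion s'.finite_toSet
        (fun p hp => ((hbadp p hp).finite))
    have hfin2 : ((⋃ p ∈ (s' : Set (Submodule F D)), {c : F | v + c • w ∈ p}) ∪ {0}).Finite :=
      hfin.union (Set.finite_singleton 0)
    obtain ⟨c, hc⟩ := hfin2.infinite_compl.nonempty
    simp only [Set.mem_compl_iff, Set.mem_union, Set.mem_singleton_iff, not_or] at hc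
    refine ⟨v + c • w, ?_⟩
    intro p hp
    rcases Finset.mem_cons.mp hp with rfl | hp
    · intro hmem
      have hcw : c • w ∈ p := by
        have := p.sub_mem hmem hvq
        simpa using this
      have : w ∈ p := by
        have h1 := p.smul_mem c⁻¹ hcw
        rwa [smul_smul, inv_mul_cancel₀ hc.2, one_smul] at h1
      exact hw this
    · intro hmem
      exact hc.1 (Set.mem_biUnion hp hmem)

lemma avoid {F D : Type*} [Field F] [Infinite F] [AddCommGroup D] [Module F D]
    {ℓ : ℕ} (p : Fin ℓ → Submodule F D) (hp : ∀ i, p i ≠ ⊤) :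
    ∃ v : D, ∀ i, v ∉ p i := by
  classical
  obtain ⟨v, hv⟩ := avoid_finset (Finset.image p Finset.univ) (by
    intro q hq
    obtain ⟨i, _, rfl⟩ := Finset.mem_image.mp hq
    exact hp i)
  exact ⟨v, fun i => hv (p i) (Finset.mem_image_of_mem p (Finset.mem_univ i))⟩

/-- Key step: a hyperplane of `W` avoiding finitely many nonzero subspaces of `W`. -/
lemma step {F V : Type*} [Field F] [Infinite F] [AddCommGroup V] [Module F V]
    [FiniteDimensional F V] {ℓ : ℕ} (S : Fin ℓ → Submodule F V) (W : Submodule F V)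
    (hle : ∀ j, S j ≤ W) (hne : ∀ j, S j ≠ ⊥) (hℓ : ℓ ≠ 0) :
    ∃ W' : Submodule F V, W' ≤ W ∧ Module.finrank F W' + 1 = Module.finrank F W ∧
      ∀ j, ¬ S j ≤ W' := by
  classical
  -- pick a nonzero element of each `S j`, viewed inside `W`
  have hx : ∀ j, ∃ x : W, (x : V) ∈ S j ∧ x ≠ 0 := by
    intro j
    obtain ⟨y, hy, hy0⟩ := Submodule.exists_mem_ne_zero_of_ne_bot (hne j)
    exact ⟨⟨y, hle j hy⟩, hy, by simpa [Submodule.mk_eq_zero] using hy0⟩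
  choose x hxS hx0 using hx
  -- find a functional nonvanishing on all `x j`
  obtain ⟨φ, hφ⟩ := avoid (F := F) (D := Module.Dual F W)
    (fun j => LinearMap.ker (Module.Dual.eval F W (x j)))
    (by
      intro j h
      apply hx0 j
      rw [← Module.forall_dual_apply_eq_zero_iff F (x j)]
      intro ψ
      have h' : LinearMap.ker (Module.Dual.eval F W (x j)) = ⊤ := h
      have hψ : ψ ∈ LinearMap.ker (Module.Dual.eval F W (x j)) := by rw [h']; trivial
      simpa using hψ)
  have hφx : ∀ j, φ (x j) ≠ 0 := by
    intro j h
    exact hφ j (by simpa using h)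
  have hφ0 : φ ≠ 0 := by
    intro h
    exact hφx ⟨0, Nat.pos_of_ne_zero hℓ⟩ (by simp [h])
  refine ⟨(LinearMap.ker φ).map W.subtype, Submodule.map_subtype_le _ _, ?_, ?_⟩
  · have hsum := LinearMap.finrank_range_add_finrank_ker φ
    have h0 : Module.finrank F (LinearMap.range φ) ≠ 0 := by
      simp only [Ne, Submodule.finrank_eq_zero, LinearMap.range_eq_bot]
      exact hφ0
    have h1 : Module.finrank F (LinearMap.range φ) ≤ 1 := by
      simpa using Submodule.finrank_le (LinearMap.range φ)
    have hmap : Module.finrank F ((LinearMap.ker φ).map W.subtype) =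
        Module.finrank F (LinearMap.ker φ) :=
      (Submodule.equivMapOfInjective W.subtype (Submodule.injective_subtype W)
        (LinearMap.ker φ)).symm.finrank_eq
    omega
  · intro j hSj
    have hxj : (x j : V) ∈ (LinearMap.ker φ).map W.subtype := hSj (hxS j)
    obtain ⟨y, hy, hyx⟩ := hxj
    have : y = x j := Subtype.ext hyx
    exact hφx j (this ▸ hy)

/-- Given finitely many subspaces `U j` of a finite-dimensional vector space over an
infinite field, with `m` the minimum of their dimensions, there is a subspace `W` of
codimension `m` that is a simultaneous complement (`W ⊔ U j = ⊤` for all `j`); moreover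
no simultaneous complement has codimension greater than `m`. -/
theorem stmt4 (F V : Type) [Field F] [Infinite F] [AddCommGroup V] [Module F V]
    [FiniteDimensional F V] {ℓ : ℕ} (U : Fin ℓ → Submodule F V) (m : ℕ)
    (hm : IsLeast (Set.range fun j => Module.finrank F (U j)) m) :
    (∃ W : Submodule F V,
        Module.finrank F V - Module.finrank F W = m ∧ ∀ j, W ⊔ U j = ⊤) ∧
      ∀ W : Submodule F V, (∀ j, W ⊔ U j = ⊤) →
        Module.finrank F V - Module.finrank F W ≤ m := by
  classical
  obtain ⟨⟨j₀, hj₀'⟩, hmin⟩ := hm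
  have hj₀ : Module.finrank F (U j₀) = m := hj₀'
  have hmle : ∀ j, m ≤ Module.finrank F (U j) := fun j => hmin ⟨j, rfl⟩
  have hℓ : ℓ ≠ 0 := fun h => (h ▸ j₀).elim0
  have hmV : m ≤ Module.finrank F V := hj₀ ▸ Submodule.finrank_le (U j₀)
  constructor
  · -- existence, by induction on the codimension k
    have key : ∀ k, k ≤ m → ∃ W : Submodule F V,
        Module.finrank F W + k = Module.finrank F V ∧ ∀ j, W ⊔ U j = ⊤ := by
      intro k
      induction k with
      | zero => exact fun _ => ⟨⊤, by simp [finrank_top], fun j => by simp⟩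
      | succ k ih =>
        intro hk
        obtain ⟨W, hWrank, hWsup⟩ := ih (Nat.le_of_succ_le hk)
        have hSne : ∀ j, W ⊓ U j ≠ ⊥ := by
          intro j hbot
          have hdim := Submodule.finrank_sup_add_finrank_inf_eq W (U j)
          rw [hWsup j, finrank_top, hbot, finrank_bot] at hdim
          have := hmle j
          omega
        obtain ⟨W', hW'le, hW'rank, hW'nle⟩ := step (F := F) (V := V) (fun j => W ⊓ U j) W
          (fun j => inf_le_left) hSne hℓ
        refine ⟨W', by omega, ?_⟩
        intro j
        have hlt : W' < W' ⊔ (W ⊓ U j) :=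
          lt_of_le_of_ne le_sup_left (fun h => hW'nle j (h ▸ le_sup_right))
        have hfr : Module.finrank F W' < Module.finrank F ↥(W' ⊔ (W ⊓ U j)) :=
          Submodule.finrank_lt_finrank_of_lt hlt
        have hsupW : W' ⊔ (W ⊓ U j) = W := by
          apply Submodule.eq_of_le_of_finrank_le (sup_le hW'le inf_le_left)
          omega
        have htop : W ⊔ U j = ⊤ := hWsup j
        rw [← hsupW, sup_assoc,
          sup_eq_right.mpr (inf_le_right : W ⊓ U j ≤ U j)] at htop
        exact htop
    obtain ⟨W, hWrank, hWsup⟩ := key m le_rfl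
    exact ⟨W, by omega, hWsup⟩
  · -- optimality
    intro W hW
    have hdim := Submodule.finrank_sup_add_finrank_inf_eq W (U j₀)
    rw [hW j₀, finrank_top, hj₀] at hdim
    omega
end

section
/- Let b ≥ 2M and let f₁, ..., f_ℓ be real numbers with |f_j| ≤ M for all j. If c ∈ [0, b] and c + Σ f_j ∈ [0, b], then there exists a permutation π of {1, ..., ℓ} such that every partial sum c + Σ_{j≤k} f_{π(j)} lies in [0, b]. -/
open Finset Equiv

/-- Greedy step: some element can be added while staying in `[0,b]`. -/
lemma step_aux (n : ℕ) (M b c : ℝ) (hb : 2 * M ≤ b) (g : Fin (n+1) → ℝ)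
    (hg : ∀ j, |g j| ≤ M) (hc : c ∈ Set.Icc 0 b) (hsum : c + ∑ j, g j ∈ Set.Icc 0 b) :
    ∃ i, c + g i ∈ Set.Icc 0 b := by
  by_contra h
  push_neg at h
  simp only [Set.mem_Icc, not_and_or, not_le] at h
  obtain ⟨hc0, hcb⟩ := hc
  obtain ⟨hs0, hsb⟩ := hsum
  have hM : ∀ j, -M ≤ g j ∧ g j ≤ M := fun j => abs_le.1 (hg j)
  rcases h 0 with h0 | h0
  · -- c + g 0 < 0: every g j ≤ 0, so total sum stays negative
    have hall : ∀ j, c + g j < 0 := by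
      intro j
      rcases h j with hj | hj
      · exact hj
      · have := (hM 0).1; have := (hM j).2; linarith
    have htail : ∑ j : Fin n, g j.succ ≤ 0 := by
      apply Finset.sum_nonpos
      intro j _
      have := hall j.succ
      linarith
    have : ∑ j, g j = g 0 + ∑ j : Fin n, g j.succ := Fin.sum_univ_succ g
    linarith [hall 0]
  · -- b < c + g 0: every g j ≥ b - c > 0, so total sum exceeds b
    have hall : ∀ j, b < c + g j := by
      intro j
      rcases h j with hj | hj
      · have := (hM 0).2; have := (hM j).1; linarith
      · exact hj
    have htail : 0 ≤ ∑ j : Fin n, g j.succ := by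
      apply Finset.sum_nonneg
      intro j _
      have := hall j.succ
      linarith
    have : ∑ j, g j = g 0 + ∑ j : Fin n, g j.succ := Fin.sum_univ_succ g
    linarith [hall 0]

lemma main_aux (M b : ℝ) (hb : 2 * M ≤ b) :
    ∀ ℓ : ℕ, ∀ f : Fin ℓ → ℝ, ∀ c : ℝ, (∀ j, |f j| ≤ M) →
      c ∈ Set.Icc 0 b → c + ∑ j, f j ∈ Set.Icc 0 b →
    ∃ π : Equiv.Perm (Fin ℓ), ∀ k : ℕ, k ≤ ℓ →
      c + ∑ j ∈ Finset.univ.filter (fun j : Fin ℓ => (j : ℕ) < k), f (π j) ∈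
        Set.Icc 0 b := by
  intro ℓ
  induction ℓ with
  | zero =>
    intro f c _ hc _
    exact ⟨1, fun k _ => by simpa using hc⟩
  | succ n ih =>
    intro f c hf hc hsum
    obtain ⟨i, hi⟩ := step_aux n M b c hb f hf hc hsum
    -- tail function after using index i first
    set g : Fin n → ℝ := fun j => f (Equiv.swap 0 i j.succ) with hg_def
    have hgM : ∀ j, |g j| ≤ M := fun j => hf _
    have hgsum : (c + f i) + ∑ j, g j = c + ∑ j, f j := by
      have h1 : ∑ j, f (Equiv.swap 0 i j) = ∑ j, f j :=
        Equiv.sum_comp (Equiv.swap 0 i) f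
      have h2 : ∑ j, f (Equiv.swap 0 i j) =
          f (Equiv.swap 0 i 0) + ∑ j : Fin n, f (Equiv.swap 0 i j.succ) :=
        Fin.sum_univ_succ _
      rw [Equiv.swap_apply_left] at h2
      simp only [hg_def]
      linarith
    have hsum' : (c + f i) + ∑ j, g j ∈ Set.Icc 0 b := by rw [hgsum]; exact hsum
    obtain ⟨σ, hσ⟩ := ih g (c + f i) hgM hi hsum'
    refine ⟨Equiv.Perm.decomposeFin.symm (i, σ), ?_⟩
    intro k hk
    match k with
    | 0 => simpa using hc
    | m + 1 =>
      have hm : m ≤ n := Nat.succ_le_succ_iff.mp hk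
      have key : ∑ j ∈ Finset.univ.filter (fun j : Fin (n+1) => (j : ℕ) < m + 1),
          f (Equiv.Perm.decomposeFin.symm (i, σ) j)
          = f i + ∑ j ∈ Finset.univ.filter (fun j : Fin n => (j : ℕ) < m), g (σ j) := by
        rw [Finset.sum_filter, Finset.sum_filter, Fin.sum_univ_succ]
        simp only [Equiv.Perm.decomposeFin_symm_apply_zero,
          Equiv.Perm.decomposeFin_symm_apply_succ, Fin.val_zero, Fin.val_succ,
          Nat.zero_lt_succ, if_true, Nat.succ_lt_succ_iff]
        rfl
      have := hσ m hm
      rw [key]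
      constructor
      · have := this.1; simp only [Set.mem_Icc] at *; linarith
      · have := this.2; simp only [Set.mem_Icc] at *; linarith

/-- Let `b ≥ 2M`, `|f j| ≤ M` for all `j`, and `c, c + ∑ f j ∈ [0, b]`. Then there is a
permutation `π` of the indices such that every partial sum `c + ∑_{j < k} f (π j)` lies
in `[0, b]`. -/
theorem stmt6 (ℓ : ℕ) (M b c : ℝ) (hM : 0 < M) (hb : 2 * M ≤ b)
    (f : Fin ℓ → ℝ) (hf : ∀ j, |f j| ≤ M)
    (hc : c ∈ Set.Icc 0 b) (hsum : c + ∑ j, f j ∈ Set.Icc 0 b) :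
    ∃ π : Equiv.Perm (Fin ℓ), ∀ k : ℕ, k ≤ ℓ →
      c + ∑ j ∈ Finset.univ.filter (fun j : Fin ℓ => (j : ℕ) < k), f (π j) ∈
        Set.Icc 0 b := by
  exact main_aux M b hb ℓ f c hf hc hsum
end

section
/- Define words u_n, v_n in two letters x, y by u₁ = xy, v₁ = yx, and u_{n+1} = u_n v_n, v_{n+1} = v_n u_n. Then the identity u_n(x,y) = v_n(x,y) holds for all elements x, y of any nilpotent group of class at most n. -/
/-- The pair `(u_{n+1}, v_{n+1})` of words in `x, y`, defined by `u₁ = xy`, `v₁ = yx`,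
`u_{n+1} = u_n v_n`, `v_{n+1} = v_n u_n` (here indexed from `0`). -/
def uvWords {G : Type} [Group G] (x y : G) : ℕ → G × G
  | 0 => (x * y, y * x)
  | n + 1 => ((uvWords x y n).1 * (uvWords x y n).2,
      (uvWords x y n).2 * (uvWords x y n).1)

open scoped commutatorElement

lemma uvWords_mem {G : Type} [Group G] (x y : G) (n : ℕ) :
    ((uvWords x y n).2)⁻¹ * (uvWords x y n).1 ∈ (⊤ : Subgroup G).lowerCentralSeries (n + 1) := by
  induction n with
  | zero =>
      have : (y * x)⁻¹ * (x * y) = ⁅x⁻¹, y⁻¹⁆ := by group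
      rw [uvWords, this, Subgroup.lowerCentralSeries_succ]
      exact Subgroup.commutator_mem_commutator (by simp [Subgroup.lowerCentralSeries_zero]) (by trivial)
  | succ n ih =>
      set u := (uvWords x y n).1
      set v := (uvWords x y n).2
      have : ((uvWords x y (n+1)).2)⁻¹ * (uvWords x y (n+1)).1
          = ⁅(v⁻¹ * u)⁻¹, v⁻¹⁆ := by
        show (v * u)⁻¹ * (u * v) = _
        group
      rw [this, Subgroup.lowerCentralSeries_succ]
      exact Subgroup.commutator_mem_commutator (inv_mem ih) (by trivial)

/-- The identity `u_n(x,y) = v_n(x,y)` holds for all elements `x, y` of any nilpotent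
group of class at most `n` (class at most `n+1` for index `n` with our `0`-based
indexing, i.e. `lowerCentralSeries G (n+1) = ⊥`). -/
theorem stmt8 {G : Type} [Group G] (n : ℕ) (h : (⊤ : Subgroup G).lowerCentralSeries (n + 1) = ⊥)
    (x y : G) : (uvWords x y n).1 = (uvWords x y n).2 := by
  have := uvWords_mem x y n
  rw [h, Subgroup.mem_bot] at this
  exact (inv_mul_eq_one.mp this).symm
end

section
/- A nilpotent group contains no free submonoid of rank 2; that is, for any two elements x, y of a nilpotent group there exist two distinct positive words w₁ ≠ w₂ in the letters x, y such that w₁ and w₂ represent the same element. -/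
lemma aux_nilpotent_words (G : Type) [Group G] [Group.IsNilpotent G] :
    ∃ w₁ w₂ : List Bool, w₁ ≠ w₂ ∧ w₁.length = w₂.length ∧
      ∀ x y : G, (w₁.map fun c => if c then x else y).prod =
        (w₂.map fun c => if c then x else y).prod := by
  refine nilpotent_center_quotient_ind
    (P := fun G _ _ => ∃ w₁ w₂ : List Bool, w₁ ≠ w₂ ∧ w₁.length = w₂.length ∧
      ∀ x y : G, (w₁.map fun c => if c then x else y).prod =
        (w₂.map fun c => if c then x else y).prod) G ?_ ?_
  · intro G _ _
    exact ⟨[true], [false], by simp, rfl, fun x y => by simp [Subsingleton.elim x y]⟩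
  · intro G _ _ ih
    obtain ⟨w₁, w₂, hne, hlen, heq⟩ := ih
    refine ⟨w₁ ++ w₂, w₂ ++ w₁, ?_, by simp [hlen], ?_⟩
    · intro h
      exact hne (List.append_inj h hlen).1
    · intro x y
      set f : Bool → G := fun c => if c then x else y with hf
      set a := (w₁.map f).prod with ha
      set b := (w₂.map f).prod with hb
      have key : a⁻¹ * b ∈ Subgroup.center G := by
        have := heq ((x : G) : G ⧸ Subgroup.center G) (y : G ⧸ Subgroup.center G)
        have hcomp : ∀ w : List Bool,
            ((w.map fun c => if c then ((x : G) : G ⧸ Subgroup.center G) else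
              ((y : G) : G ⧸ Subgroup.center G)).prod)
            = ((w.map f).prod : G ⧸ Subgroup.center G) := by
          intro w
          induction w with
          | nil => simp
          | cons c t iht =>
            simp only [List.map_cons, List.prod_cons, QuotientGroup.mk_mul, ← iht]
            cases c <;> simp [hf]
        rw [hcomp w₁, hcomp w₂] at this
        exact QuotientGroup.eq.mp this
      have hba : b = a * (a⁻¹ * b) := by group
      simp only [List.map_append, List.prod_append, ← ha, ← hb]
      calc a * b = a * (a * (a⁻¹ * b)) := by rw [← hba]
        _ = a * ((a⁻¹ * b) * a) := by rw [(Subgroup.mem_center_iff.mp key a)]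
        _ = (a * (a⁻¹ * b)) * a := by group
        _ = b * a := by rw [← hba]

/-- A nilpotent group contains no free submonoid of rank 2: for any two elements `x, y`
there exist two distinct positive words (words in the letters `x`, `y` without inverses)
representing the same element. -/
theorem stmt9 {G : Type} [Group G] [Group.IsNilpotent G] (x y : G) :
    ∃ w₁ w₂ : List Bool, w₁ ≠ w₂ ∧
      (w₁.map fun c => if c then x else y).prod =
        (w₂.map fun c => if c then x else y).prod := by
  obtain ⟨w₁, w₂, hne, _, heq⟩ := aux_nilpotent_words G
  exact ⟨w₁, w₂, hne, heq x y⟩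
end

section
/- Let G be an HNN-extension with stable letter t, base group B, and associated subgroups S, T both proper subgroups of B. Then G contains a non-abelian free subgroup; specifically, for a ∈ B \ S and b ∈ B \ T, the elements x = at⁻¹ and y = bt generate a free subgroup of rank 2. -/
open HNNExtension

namespace Stmt12Aux

/-- no-inverse-pair chain property for a free group word -/
lemma chain'_nr {α : Type} : ∀ l : List (α × Bool),
    (∀ (L₂ L₃ : List (α × Bool)) (x : α) (c : Bool), l ≠ L₂ ++ (x, c) :: (x, !c) :: L₃) →
    l.Chain' (fun p q => ¬(p.1 = q.1 ∧ q.2 = !p.2))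
  | [], _ => List.isChain_nil
  | [_], _ => List.isChain_singleton _
  | ⟨z, s⟩ :: ⟨y, u⟩ :: rest, h => by
    refine List.isChain_cons_cons.2 ⟨?_, chain'_nr (⟨y, u⟩ :: rest) ?_⟩
    · rintro ⟨h1, h2⟩
      dsimp at h1 h2
      subst h1; subst h2
      exact h [] rest z s rfl
    · intro L₂ L₃ x c hx
      exact h ((z, s) :: L₂) L₃ x c (by simp [hx])

variable {K : Type} [Group K] (S T : Subgroup K) (μ : S ≃* T) (a b : K)

def uu (c : Bool × Bool) : ℤˣ := if c.1 = c.2 then -1 else 1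

def pre (c : Bool × Bool) : K := if c.2 then (if c.1 then a else b) else 1

def post (c : Bool × Bool) : K := if c.2 then 1 else (if c.1 then a⁻¹ else b⁻¹)

def toL : List (Bool × Bool) → List (ℤˣ × K)
  | [] => []
  | [c] => [(uu c, post a b c)]
  | c :: c' :: cs => (uu c, post a b c * pre a b c') :: toL (c' :: cs)

lemma toL_head : ∀ (c : Bool × Bool) (cs : List (Bool × Bool)),
    ∃ (g : K) (rest : List (ℤˣ × K)), toL a b (c :: cs) = (uu c, g) :: rest
  | c, [] => ⟨post a b c, [], rfl⟩
  | c, c' :: cs => ⟨post a b c * pre a b c', toL a b (c' :: cs), rfl⟩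

lemma chain_toL (ha : a ∉ S) (hb : b ∉ T) :
    ∀ l : List (Bool × Bool), l.Chain' (fun p q => ¬(p.1 = q.1 ∧ q.2 = !p.2)) →
    (toL a b l).Chain' (fun x y => x.2 ∈ toSubgroup S T x.1 → x.1 = y.1)
  | [], _ => List.isChain_nil
  | [c], _ => List.isChain_singleton _
  | c :: c' :: cs, h => by
    obtain ⟨hcc, htail⟩ := List.isChain_cons_cons.1 h
    obtain ⟨g, rest, hg⟩ := toL_head a b c' cs
    rw [show toL a b (c :: c' :: cs)
        = (uu c, post a b c * pre a b c') :: toL a b (c' :: cs) from rfl, hg,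
      List.Chain', List.isChain_cons_cons]
    refine ⟨?_, hg ▸ chain_toL ha hb (c' :: cs) htail⟩
    intro hmem
    obtain ⟨c1, c2⟩ := c
    obtain ⟨c1', c2'⟩ := c'
    rcases c1 <;> rcases c2 <;> rcases c1' <;> rcases c2' <;>
      simp_all [uu, pre, post, toSubgroup_one, toSubgroup_neg_one]

def F : Bool → HNNExtension K S T μ := fun c =>
  if c then HNNExtension.of (G := K) (A := S) (B := T) (φ := μ) a * t⁻¹
  else HNNExtension.of (G := K) (A := S) (B := T) (φ := μ) b * t

lemma e_eq (c : Bool × Bool) :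
    (cond c.2 (F S T μ a b c.1) (F S T μ a b c.1)⁻¹)
      = of (pre a b c) * t ^ ((uu c : ℤˣ) : ℤ) * of (post a b c) := by
  obtain ⟨c1, c2⟩ := c
  rcases c1 <;> rcases c2 <;>
    simp [F, pre, post, uu, mul_assoc]

lemma prod_eq : ∀ (cs : List (Bool × Bool)) (c : Bool × Bool),
    (((c :: cs).map (fun x => cond x.2 (F S T μ a b x.1) (F S T μ a b x.1)⁻¹)).prod :
        HNNExtension K S T μ)
      = of (pre a b c) *
        ((toL a b (c :: cs)).map (fun x => t ^ ((x.1 : ℤˣ) : ℤ) * of x.2)).prod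
  | [], c => by
    simp [toL, e_eq, mul_assoc]
  | c' :: cs, c => by
    rw [List.map_cons, List.prod_cons, prod_eq cs c', e_eq,
      show toL a b (c :: c' :: cs)
        = (uu c, post a b c * pre a b c') :: toL a b (c' :: cs) from rfl,
      List.map_cons, List.prod_cons]
    simp [mul_assoc, map_mul]

end Stmt12Aux

/-- Let `G` be an HNN-extension with stable letter `t`, base group `K`, and associated
subgroups `S, T` both proper in `K`. Then for `a ∈ K \ S` and `b ∈ K \ T` the elements
`x = a t⁻¹` and `y = b t` generate a free subgroup of rank 2 (the induced map from the
free group on two generators is injective). -/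
theorem stmt12 {K : Type} [Group K] (S T : Subgroup K) (μ : S ≃* T)
    (hS : S ≠ ⊤) (hT : T ≠ ⊤) (a b : K) (ha : a ∉ S) (hb : b ∉ T) :
    Function.Injective (FreeGroup.lift (fun c : Bool =>
      if c then
        HNNExtension.of (G := K) (A := S) (B := T) (φ := μ) a *
          (HNNExtension.t : HNNExtension K S T μ)⁻¹
      else
        HNNExtension.of (G := K) (A := S) (B := T) (φ := μ) b *
          (HNNExtension.t : HNNExtension K S T μ))) := by
  rw [injective_iff_map_eq_one]
  intro w hw
  by_contra hw1
  obtain ⟨c, cs, hl⟩ : ∃ c cs, w.toWord = c :: cs := by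
    rcases h : w.toWord with _ | ⟨c, cs⟩
    · exact absurd (FreeGroup.toWord_eq_nil_iff.1 h) hw1
    · exact ⟨c, cs, rfl⟩
  have hred : ∀ (L₂ L₃ : List (Bool × Bool)) (x : Bool) (d : Bool),
      w.toWord ≠ L₂ ++ (x, d) :: (x, !d) :: L₃ := by
    intro L₂ L₃ x d hx
    exact FreeGroup.reduce.not (p := False)
      ((FreeGroup.reduce_toWord w).trans hx)
  have hchain := Stmt12Aux.chain'_nr w.toWord hred
  rw [hl] at hchain
  -- the reduced HNN word
  set R : HNNExtension.NormalWord.ReducedWord K S T :=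
    ⟨Stmt12Aux.pre a b c, Stmt12Aux.toL a b (c :: cs),
      Stmt12Aux.chain_toL S T a b ha hb (c :: cs) hchain⟩ with hR
  have hprod : R.prod μ = 1 := by
    rw [← hw]
    conv_rhs => rw [← FreeGroup.mk_toWord (x := w), hl]
    rw [FreeGroup.lift_mk]
    have := (Stmt12Aux.prod_eq S T μ a b cs c).symm
    simpa [HNNExtension.NormalWord.ReducedWord.prod, Stmt12Aux.F, hR] using this
  have h1 : (HNNExtension.NormalWord.ReducedWord.empty K S T).prod μ = 1 := by
    simp [HNNExtension.NormalWord.ReducedWord.prod]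
  have := (HNNExtension.ReducedWord.map_fst_eq_and_of_prod_eq μ
    (hprod.trans h1.symm)).1
  rw [hR] at this
  obtain ⟨g, rest, hg⟩ := Stmt12Aux.toL_head a b c cs
  simp [hg, HNNExtension.NormalWord.ReducedWord.empty] at this
end

section
/- Let χ : G → ℤ be a surjective homomorphism with kernel N and t ∈ G with χ(t) = 1. Suppose B₁ and B₂ are finitely generated subgroups of N with t⁻¹B₁t ⊆ B₁, ∪_{ℓ∈ℕ} t^ℓ B₁ t^{-ℓ} = N, and t B₂ t⁻¹ ⊆ B₂, ∪_{ℓ∈ℕ} t^{-ℓ} B₂ t^ℓ = N. Then N is finitely generated; in fact N equals a conjugate of B₂ (and of B₁). -/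
private lemma fg_map_aux {G : Type} [Group G] (f : G →* G) {H : Subgroup G} (h : H.FG) :
    (H.map f).FG := by
  obtain ⟨S, hS⟩ := h
  exact (Subgroup.fg_iff _).mpr ⟨f '' S, by rw [← hS, MonoidHom.map_closure],
    (S.finite_toSet).image f⟩

/-- Let `χ : G → ℤ` be surjective with kernel `N`, `t` with `χ t = 1`. If `B₁, B₂` are
finitely generated subgroups of `N` with `t⁻¹B₁t ⊆ B₁`, `⋃ t^ℓ B₁ t^{-ℓ} = N`, and
`t B₂ t⁻¹ ⊆ B₂`, `⋃ t^{-ℓ} B₂ t^ℓ = N`, then `N` is finitely generated, and `N` equals a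
conjugate of `B₂` (and of `B₁`). -/
theorem stmt14 {G : Type} [Group G] (χ : G →* Multiplicative ℤ)
    (hχ : Function.Surjective χ) (t : G) (ht : χ t = Multiplicative.ofAdd 1)
    (B₁ B₂ : Subgroup G) (hB₁fg : B₁.FG) (hB₂fg : B₂.FG)
    (hB₁N : B₁ ≤ χ.ker) (hB₂N : B₂ ≤ χ.ker)
    (hB₁conj : ∀ x ∈ B₁, t⁻¹ * x * t ∈ B₁)
    (hB₁union : ∀ n ∈ χ.ker, ∃ ℓ : ℕ, (t ^ ℓ)⁻¹ * n * t ^ ℓ ∈ B₁)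
    (hB₂conj : ∀ x ∈ B₂, t * x * t⁻¹ ∈ B₂)
    (hB₂union : ∀ n ∈ χ.ker, ∃ ℓ : ℕ, t ^ ℓ * n * (t ^ ℓ)⁻¹ ∈ B₂) :
    χ.ker.FG ∧ (∃ g : G, χ.ker = Subgroup.map (MulAut.conj g).toMonoidHom B₂) ∧
      (∃ g : G, χ.ker = Subgroup.map (MulAut.conj g).toMonoidHom B₁) := by
  classical
  -- B₁ is stable under conjugation by negative powers of t
  have hB1 : ∀ (k : ℕ) (x : G), x ∈ B₁ → (t ^ k)⁻¹ * x * t ^ k ∈ B₁ := by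
    intro k
    induction k with
    | zero => intro x hx; simpa using hx
    | succ k ih =>
      intro x hx
      have h2 := ih _ (hB₁conj x hx)
      have he : (t ^ (k + 1))⁻¹ * x * t ^ (k + 1) = (t ^ k)⁻¹ * (t⁻¹ * x * t) * t ^ k := by
        rw [pow_succ']; group
      rw [he]; exact h2
  -- B₂ is stable under conjugation by positive powers of t
  have hB2 : ∀ (k : ℕ) (x : G), x ∈ B₂ → t ^ k * x * (t ^ k)⁻¹ ∈ B₂ := by
    intro k
    induction k with
    | zero => intro x hx; simpa using hx
    | succ k ih =>
      intro x hx
      have h2 := ih _ (hB₂conj x hx)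
      have he : t ^ (k + 1) * x * (t ^ (k + 1))⁻¹ = t ^ k * (t * x * t⁻¹) * (t ^ k)⁻¹ := by
        rw [pow_succ']; group
      rw [he]; exact h2
  -- choose L with t^L B₁ t^{-L} ≤ B₂
  obtain ⟨S₁, hS₁⟩ := hB₁fg
  obtain ⟨S₂, hS₂⟩ := hB₂fg
  have hS₁B : ∀ s ∈ S₁, (s : G) ∈ B₁ := fun s hs => hS₁ ▸ Subgroup.subset_closure hs
  have hS₂B : ∀ s ∈ S₂, (s : G) ∈ B₂ := fun s hs => hS₂ ▸ Subgroup.subset_closure hs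
  have hex1 : ∀ s ∈ S₁, ∃ ℓ : ℕ, t ^ ℓ * s * (t ^ ℓ)⁻¹ ∈ B₂ := fun s hs =>
    hB₂union s (hB₁N (hS₁B s hs))
  have hex2 : ∀ s ∈ S₂, ∃ ℓ : ℕ, (t ^ ℓ)⁻¹ * s * t ^ ℓ ∈ B₁ := fun s hs =>
    hB₁union s (hB₂N (hS₂B s hs))
  let f1 : G → ℕ := fun s => if h : s ∈ S₁ ∧ (∃ ℓ : ℕ, t ^ ℓ * s * (t ^ ℓ)⁻¹ ∈ B₂)
    then h.2.choose else 0
  let f2 : G → ℕ := fun s => if h : s ∈ S₂ ∧ (∃ ℓ : ℕ, (t ^ ℓ)⁻¹ * s * t ^ ℓ ∈ B₁)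
    then h.2.choose else 0
  set L : ℕ := S₁.sup f1 with hLdef
  set M : ℕ := S₂.sup f2 with hMdef
  -- generators of B₁ conjugate into B₂ at level L
  have hgen1 : ∀ s ∈ S₁, t ^ L * s * (t ^ L)⁻¹ ∈ B₂ := by
    intro s hs
    have hh : s ∈ S₁ ∧ (∃ ℓ : ℕ, t ^ ℓ * s * (t ^ ℓ)⁻¹ ∈ B₂) := ⟨hs, hex1 s hs⟩
    have hℓ : t ^ (f1 s) * s * (t ^ (f1 s))⁻¹ ∈ B₂ := by
      simp only [f1, dif_pos hh]; exact hh.2.choose_spec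
    have hle : f1 s ≤ L := Finset.le_sup hs
    have h2 := hB2 (L - f1 s) _ hℓ
    have he : t ^ (L - f1 s) * (t ^ (f1 s) * s * (t ^ (f1 s))⁻¹) * (t ^ (L - f1 s))⁻¹
        = t ^ L * s * (t ^ L)⁻¹ := by
      have : t ^ L = t ^ (L - f1 s) * t ^ (f1 s) := by
        rw [← pow_add]; congr 1; omega
      rw [this]; group
    rwa [he] at h2
  have hgen2 : ∀ s ∈ S₂, (t ^ M)⁻¹ * s * t ^ M ∈ B₁ := by
    intro s hs
    have hh : s ∈ S₂ ∧ (∃ ℓ : ℕ, (t ^ ℓ)⁻¹ * s * t ^ ℓ ∈ B₁) := ⟨hs, hex2 s hs⟩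
    have hℓ : (t ^ (f2 s))⁻¹ * s * t ^ (f2 s) ∈ B₁ := by
      simp only [f2, dif_pos hh]; exact hh.2.choose_spec
    have hle : f2 s ≤ M := Finset.le_sup hs
    have h2 := hB1 (M - f2 s) _ hℓ
    have he : (t ^ (M - f2 s))⁻¹ * ((t ^ (f2 s))⁻¹ * s * t ^ (f2 s)) * t ^ (M - f2 s)
        = (t ^ M)⁻¹ * s * t ^ M := by
      have : t ^ M = t ^ (f2 s) * t ^ (M - f2 s) := by
        rw [← pow_add]; congr 1; omega
      rw [this]; group
    rwa [he] at h2
  -- extend from generators to all of B₁ / B₂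
  have hLB : ∀ b ∈ B₁, t ^ L * b * (t ^ L)⁻¹ ∈ B₂ := by
    intro b hb
    have hsub : B₁ ≤ B₂.comap (MulAut.conj (t ^ L)).toMonoidHom := by
      rw [← hS₁]
      apply Subgroup.closure_le _ |>.mpr
      intro s hs
      simp only [SetLike.mem_coe, Subgroup.mem_comap, MulEquiv.coe_toMonoidHom, MulAut.conj_apply]
      exact hgen1 s (Finset.mem_coe.mp hs)
    have := hsub hb
    simp only [Subgroup.mem_comap, MulEquiv.coe_toMonoidHom, MulAut.conj_apply] at this
    simpa [mul_assoc] using this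
  have hMB : ∀ b ∈ B₂, (t ^ M)⁻¹ * b * t ^ M ∈ B₁ := by
    intro b hb
    have hsub : B₂ ≤ B₁.comap (MulAut.conj (t ^ M))⁻¹.toMonoidHom := by
      rw [← hS₂]
      apply Subgroup.closure_le _ |>.mpr
      intro s hs
      simp only [SetLike.mem_coe, Subgroup.mem_comap, MulEquiv.coe_toMonoidHom, MulAut.conj_inv_apply]
      exact hgen2 s (Finset.mem_coe.mp hs)
    have := hsub hb
    simp only [Subgroup.mem_comap, MulEquiv.coe_toMonoidHom, MulAut.conj_inv_apply] at this
    simpa [mul_assoc] using this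
  set K : ℕ := M + L with hKdef
  -- key: every element of the kernel conjugates into B₁ at level K
  have key : ∀ n ∈ χ.ker, (t ^ K)⁻¹ * n * t ^ K ∈ B₁ := by
    intro n hn
    obtain ⟨ℓ, hℓ⟩ := hB₁union n hn
    by_cases hcase : ℓ ≤ K
    · have h2 := hB1 (K - ℓ) _ hℓ
      have he : (t ^ (K - ℓ))⁻¹ * ((t ^ ℓ)⁻¹ * n * t ^ ℓ) * t ^ (K - ℓ)
          = (t ^ K)⁻¹ * n * t ^ K := by
        have : t ^ K = t ^ ℓ * t ^ (K - ℓ) := by rw [← pow_add]; congr 1; omega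
        rw [this]; group
      rwa [he] at h2
    · -- n itself lies in B₂
      push_neg at hcase
      have hL : L ≤ ℓ := by omega
      have h2 := hLB _ hℓ
      have h3 := hB2 (ℓ - L) _ h2
      have he : t ^ (ℓ - L) * (t ^ L * ((t ^ ℓ)⁻¹ * n * t ^ ℓ) * (t ^ L)⁻¹) * (t ^ (ℓ - L))⁻¹
          = n := by
        have : t ^ ℓ = t ^ (ℓ - L) * t ^ L := by rw [← pow_add]; congr 1; omega
        rw [this]; group
      rw [he] at h3
      have h4 := hMB n h3
      have h5 := hB1 L _ h4
      have he2 : (t ^ L)⁻¹ * ((t ^ M)⁻¹ * n * t ^ M) * t ^ L = (t ^ K)⁻¹ * n * t ^ K := by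
        have : t ^ K = t ^ M * t ^ L := by rw [← pow_add]
        rw [this]; group
      rwa [he2] at h5
  have hker : χ.ker.Normal := MonoidHom.normal_ker χ
  -- N = t^K B₁ t^{-K}
  have Neq1 : χ.ker = Subgroup.map (MulAut.conj (t ^ K)).toMonoidHom B₁ := by
    ext x
    rw [Subgroup.mem_map_equiv, MulAut.conj_symm_apply]
    constructor
    · intro hx
      have := key x hx
      simpa [mul_assoc] using this
    · intro hx
      have hx' : (t ^ K)⁻¹ * x * t ^ K ∈ χ.ker := hB₁N (by simpa [mul_assoc] using hx)
      have h2 := hker.conj_mem _ hx' (t ^ K)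
      have he : t ^ K * ((t ^ K)⁻¹ * x * t ^ K) * (t ^ K)⁻¹ = x := by group
      rwa [he] at h2
  -- N = t^M B₂ t^{-M}
  have Neq2 : χ.ker = Subgroup.map (MulAut.conj (t ^ M)).toMonoidHom B₂ := by
    ext x
    rw [Subgroup.mem_map_equiv, MulAut.conj_symm_apply]
    constructor
    · intro hx
      have h1 := key x hx
      have h2 := hLB _ h1
      have he : t ^ L * ((t ^ K)⁻¹ * x * t ^ K) * (t ^ L)⁻¹ = (t ^ M)⁻¹ * x * t ^ M := by
        have : t ^ K = t ^ M * t ^ L := by rw [← pow_add]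
        rw [this]; group
      rw [he] at h2
      simpa [mul_assoc] using h2
    · intro hx
      have hx' : (t ^ M)⁻¹ * x * t ^ M ∈ χ.ker := hB₂N (by simpa [mul_assoc] using hx)
      have h2 := hker.conj_mem _ hx' (t ^ M)
      have he : t ^ M * ((t ^ M)⁻¹ * x * t ^ M) * (t ^ M)⁻¹ = x := by group
      rwa [he] at h2
  refine ⟨?_, ⟨t ^ M, Neq2⟩, ⟨t ^ K, Neq1⟩⟩
  rw [Neq2]
  exact fg_map_aux _ ⟨S₂, hS₂⟩
end

section
/- Let χ : G → ℤ be a surjective homomorphism, t ∈ G with χ(t) = 1, and H a subgroup of ker χ with t H t⁻¹ ⊊ H (strict inclusion) and ∪_{ℓ∈ℕ} t^{-ℓ} H t^ℓ = ker χ. Then there is no finitely generated subgroup B of ker χ with B ⊆ t B t⁻¹ and ∪_{j∈ℕ} t^j B t^{-j} = ker χ. -/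
/-- Let `χ : G → ℤ` be surjective, `t` with `χ t = 1`, and `H ≤ ker χ` with
`t H t⁻¹ ⊊ H` and `⋃ t^{-ℓ} H t^ℓ = ker χ`. Then there is no finitely generated subgroup
`B ≤ ker χ` with `B ⊆ t B t⁻¹` and `⋃ t^j B t^{-j} = ker χ`. -/
theorem stmt15 {G : Type} [Group G] (χ : G →* Multiplicative ℤ)
    (hχ : Function.Surjective χ) (t : G) (ht : χ t = Multiplicative.ofAdd 1)
    (H : Subgroup G) (hHN : H ≤ χ.ker)
    (hdesc : Subgroup.map (MulAut.conj t).toMonoidHom H < H)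
    (hunion : ∀ n ∈ χ.ker, ∃ ℓ : ℕ, t ^ ℓ * n * (t ^ ℓ)⁻¹ ∈ H) :
    ¬ ∃ B : Subgroup G, B.FG ∧ B ≤ χ.ker ∧ (∀ x ∈ B, t⁻¹ * x * t ∈ B) ∧
        ∀ n ∈ χ.ker, ∃ j : ℕ, (t ^ j)⁻¹ * n * t ^ j ∈ B := by
  rintro ⟨B, ⟨S, hS⟩, hBN, hBt, hBunion⟩
  have hconj : ∀ x ∈ H, t * x * t⁻¹ ∈ H := by
    intro x hx
    exact hdesc.le ⟨x, hx, rfl⟩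
  have hconjk : ∀ (k : ℕ) (x : G), x ∈ H → t ^ k * x * (t ^ k)⁻¹ ∈ H := by
    intro k
    induction k with
    | zero => intro x hx; simpa using hx
    | succ n ih =>
      intro x hx
      have := hconj _ (ih x hx)
      have heq : t * (t ^ n * x * (t ^ n)⁻¹) * t⁻¹
          = t ^ (n + 1) * x * (t ^ (n + 1))⁻¹ := by
        rw [pow_succ']
        group
      rwa [heq] at this
  have hmono : ∀ (k : ℕ) (x : G), t ^ k * x * (t ^ k)⁻¹ ∈ H →
      ∀ m, k ≤ m → t ^ m * x * (t ^ m)⁻¹ ∈ H := by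
    intro k x hk m hkm
    obtain ⟨d, rfl⟩ := Nat.exists_eq_add_of_le hkm
    have := hconjk d _ hk
    have heq : t ^ d * (t ^ k * x * (t ^ k)⁻¹) * (t ^ d)⁻¹
        = t ^ (k + d) * x * (t ^ (k + d))⁻¹ := by
      rw [pow_add]
      group
    rwa [heq] at this
  -- choose L so that t^L B t^{-L} ≤ H
  have hchoice : ∀ s : S, ∃ ℓ : ℕ, t ^ ℓ * (s : G) * (t ^ ℓ)⁻¹ ∈ H := by
    intro ⟨s, hs⟩
    exact hunion s (hBN (hS ▸ Subgroup.subset_closure hs))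
  choose ℓ hℓ using hchoice
  set L : ℕ := S.attach.sup ℓ with hL
  have hBH : ∀ x ∈ B, t ^ L * x * (t ^ L)⁻¹ ∈ H := by
    have : B ≤ H.comap (MulAut.conj (t ^ L)).toMonoidHom := by
      rw [← hS, Subgroup.closure_le]
      intro s hs
      have : t ^ L * s * (t ^ L)⁻¹ ∈ H :=
        hmono _ s (hℓ ⟨s, hs⟩) L (Finset.le_sup (Finset.mem_attach _ _))
      simpa only [SetLike.mem_coe, Subgroup.mem_comap, MulEquiv.coe_toMonoidHom, MulAut.conj_apply]
        using this
    intro x hx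
    simpa only [Subgroup.mem_comap, MulEquiv.coe_toMonoidHom, MulAut.conj_apply]
      using this hx
  -- strictness witness
  obtain ⟨h, hH, hnot⟩ := SetLike.exists_of_lt hdesc
  have hth : t⁻¹ * h * t ∉ H := by
    intro hmem
    exact hnot ⟨t⁻¹ * h * t, hmem, by simp only [MulEquiv.coe_toMonoidHom, MulAut.conj_apply]; group⟩
  -- element n
  set n : G := (t ^ (L + 1))⁻¹ * h * t ^ (L + 1) with hn
  have hnker : n ∈ χ.ker := by
    have hhker : χ h = 1 := hHN hH
    simp [hn, MonoidHom.mem_ker, map_mul, hhker]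
  obtain ⟨j, hj⟩ := hBunion n hnker
  have hjH := hBH _ hj
  have heq : t ^ L * ((t ^ j)⁻¹ * n * t ^ j) * (t ^ L)⁻¹
      = (t ^ (j + 1))⁻¹ * h * t ^ (j + 1) := by
    rw [hn]
    group
  rw [heq] at hjH
  have := hconjk j _ hjH
  have heq2 : t ^ j * ((t ^ (j + 1))⁻¹ * h * t ^ (j + 1)) * (t ^ j)⁻¹
      = t⁻¹ * h * t := by group
  rw [heq2] at this
  exact hth this
end

section
/- Let G be a finitely generated group, N a normal subgroup with infinite cyclic quotient G/N, and M ⊆ N a normal subgroup of G such that N/M is an infinite locally finite group. Then for every t ∈ G generating G modulo N and every finitely generated subgroup B ⊆ N with B ⊆ tBt⁻¹, the union ∪_{ℓ∈ℕ} t^ℓ B t^{-ℓ} is a proper subgroup of N. -/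
/-- Let `G` be a finitely generated group, `N = ker χ` for a surjection `χ : G → ℤ`
(so `G/N` is infinite cyclic), and `M ⊴ G` with `M ≤ N` such that `N/M` is an infinite
locally finite group. Then for every `t` generating `G` modulo `N` and every finitely
generated subgroup `B ≤ N` with `B ⊆ t B t⁻¹`, the union `⋃ t^ℓ B t^{-ℓ}` is a proper
subgroup of `N`. -/
theorem stmt16 {G : Type} [Group G] [Group.FG G] (χ : G →* Multiplicative ℤ)
    (hχ : Function.Surjective χ) (M : Subgroup G) [M.Normal] (hMN : M ≤ χ.ker)
    (hInf : Infinite (χ.ker ⧸ M.subgroupOf χ.ker))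
    (hLF : ∀ S : Subgroup (χ.ker ⧸ M.subgroupOf χ.ker), S.FG → Finite S)
    (t : G) (ht : χ t = Multiplicative.ofAdd 1 ∨ χ t = Multiplicative.ofAdd (-1))
    (B : Subgroup G) (hBfg : B.FG) (hBN : B ≤ χ.ker)
    (hBconj : ∀ x ∈ B, t⁻¹ * x * t ∈ B) :
    ∃ n ∈ χ.ker, ∀ ℓ : ℕ, (t ^ ℓ)⁻¹ * n * t ^ ℓ ∉ B := by
  classical
  set N := χ.ker with hNdef
  -- conjugation by t preserves N
  have hker : ∀ x : G, x ∈ N → t * x * t⁻¹ ∈ N := by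
    intro x hx
    have hx' : χ x = 1 := hx
    simp only [hNdef, MonoidHom.mem_ker, map_mul, map_inv, hx', mul_one]
    exact mul_inv_cancel _
  -- conjugation hom on N
  let g : N →* N :=
    { toFun := fun x => ⟨t * (x : G) * t⁻¹, hker x x.2⟩
      map_one' := by ext; simp
      map_mul' := by intro a b; ext; show t * ((a : G) * (b : G)) * t⁻¹ = t * (a : G) * t⁻¹ * (t * (b : G) * t⁻¹); group }
  -- the quotient Q and the induced hom ψ : Q →* Q
  let mkQ := QuotientGroup.mk' (M.subgroupOf N)
  have hlift : ∀ x ∈ M.subgroupOf N, (mkQ.comp g) x = 1 := by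
    intro x hx
    have : (g x : G) ∈ M := by
      have hxM : (x : G) ∈ M := hx
      exact Subgroup.Normal.conj_mem ‹M.Normal› _ hxM t
    simp only [MonoidHom.comp_apply]
    exact (QuotientGroup.eq_one_iff _).mpr ((Subgroup.mem_subgroupOf).mpr this)
  let ψ : (N ⧸ M.subgroupOf N) →* (N ⧸ M.subgroupOf N) :=
    QuotientGroup.lift (M.subgroupOf N) (mkQ.comp g) hlift
  have hψmk : ∀ x : N, ψ (mkQ x) = mkQ (g x) := fun x => rfl
  -- the image of B
  let Bbar : Subgroup (N ⧸ M.subgroupOf N) := (B.subgroupOf N).map mkQ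
  -- Bbar is finite
  have hfgB : Group.FG B := (Group.fg_iff_subgroup_fg B).2 hBfg
  have hfgB' : Group.FG (B.subgroupOf N) :=
    Group.fg_of_surjective (f := (Subgroup.subgroupOfEquivOfLe hBN).symm.toMonoidHom)
      (Subgroup.subgroupOfEquivOfLe hBN).symm.surjective
  have hfgBbar : Group.FG Bbar :=
    Group.fg_of_surjective (f := mkQ.subgroupMap (B.subgroupOf N))
      (MonoidHom.subgroupMap_surjective _ _)
  have hfinBbar : Finite Bbar := hLF Bbar ((Group.fg_iff_subgroup_fg Bbar).1 hfgBbar)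
  have hfinSet : (Bbar : Set (N ⧸ M.subgroupOf N)).Finite := Set.toFinite _
  -- Bbar ⊆ ψ '' Bbar
  have hsub : (Bbar : Set (N ⧸ M.subgroupOf N)) ⊆ ψ '' (Bbar : Set _) := by
    rintro q hq
    obtain ⟨⟨b, hbN⟩, hbB, rfl⟩ := hq
    have hbB' : b ∈ B := hbB
    have hb2 : t⁻¹ * b * t ∈ B := hBconj b hbB'
    have hb2N : t⁻¹ * b * t ∈ N := hBN hb2
    refine ⟨mkQ ⟨t⁻¹ * b * t, hb2N⟩, ⟨⟨t⁻¹ * b * t, hb2N⟩, hb2, rfl⟩, ?_⟩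
    rw [hψmk]
    congr 1
    ext
    show t * (t⁻¹ * b * t) * t⁻¹ = b
    group
  -- cardinality forces equality
  have heq : ψ '' (Bbar : Set _) = (Bbar : Set _) :=
    (Set.eq_of_subset_of_ncard_le hsub (Set.ncard_image_le hfinSet)
      (hfinSet.image ψ)).symm
  have hψB : ∀ q ∈ Bbar, ψ q ∈ Bbar := by
    intro q hq
    have : ψ q ∈ ψ '' (Bbar : Set _) := ⟨q, hq, rfl⟩
    rw [heq] at this
    exact this
  -- key lemma by induction
  have key : ∀ (ℓ : ℕ) (x : G) (hx : x ∈ N),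
      (t ^ ℓ)⁻¹ * x * t ^ ℓ ∈ B → mkQ ⟨x, hx⟩ ∈ Bbar := by
    intro ℓ
    induction ℓ with
    | zero =>
      intro x hx h
      simp only [pow_zero, inv_one, one_mul, mul_one] at h
      exact ⟨⟨x, hx⟩, h, rfl⟩
    | succ ℓ ih =>
      intro x hx h
      have hyN : t⁻¹ * x * t ∈ N := by
        have hx' : χ x = 1 := hx
        simp only [hNdef, MonoidHom.mem_ker, map_mul, map_inv, hx', mul_one]
        exact inv_mul_cancel _
      have h' : (t ^ ℓ)⁻¹ * (t⁻¹ * x * t) * t ^ ℓ ∈ B := by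
        have : (t ^ ℓ)⁻¹ * (t⁻¹ * x * t) * t ^ ℓ = (t ^ (ℓ + 1))⁻¹ * x * t ^ (ℓ + 1) := by
          rw [pow_succ]
          group
        rw [this]
        exact h
      have hmem := ih (t⁻¹ * x * t) hyN h'
      have := hψB _ hmem
      rw [hψmk] at this
      have hgx : g ⟨t⁻¹ * x * t, hyN⟩ = ⟨x, hx⟩ := by
        ext
        show t * (t⁻¹ * x * t) * t⁻¹ = x
        group
      rwa [hgx] at this
  -- pick an element outside Bbar
  have hex : ∃ q : N ⧸ M.subgroupOf N, q ∉ Bbar := by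
    by_contra hcon
    push_neg at hcon
    have : Function.Surjective (fun b : Bbar => (b : N ⧸ M.subgroupOf N)) :=
      fun q => ⟨⟨q, hcon q⟩, rfl⟩
    haveI : Finite (N ⧸ M.subgroupOf N) := Finite.of_surjective _ this
    exact not_finite (N ⧸ M.subgroupOf N)
  obtain ⟨q, hq⟩ := hex
  obtain ⟨⟨n, hnN⟩, rfl⟩ := QuotientGroup.mk'_surjective (M.subgroupOf N) q
  refine ⟨n, hnN, fun ℓ hmem => ?_⟩
  exact hq (key ℓ n hnN hmem)
end

section
/- Suppose a group G acts by automorphisms on a measured tree (T, ≤, λ) with associated character χ. If g, h ∈ G commute, h is hyperbolic (χ(h) ≠ 0), then the axis A_h of h is invariant under g; and if additionally χ(g) ≠ 0, then A_g = A_h. -/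
section aux
variable {G T : Type} [Group G] [PartialOrder T] [MulAction G T]
    (lam : T → ℝ)

/-- Key inclusion: if χ(g),χ(h) > 0 everywhere and g,h commute on T, then
any point with `a ≤ g•a` satisfies `a ≤ h•a`. -/
lemma main_sub
    (hdir : ∀ a b : T, ∃ c, c ≤ a ∧ c ≤ b)
    (hchain : ∀ a : T, IsChain (· ≤ ·) {b : T | b ≤ a})
    (hlam : ∀ a b c : T, b ≤ a → c ≤ a → (b ≤ c ↔ lam b ≤ lam c))
    (hord : ∀ (g : G) (a b : T), a ≤ b ↔ g • a ≤ g • b)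
    (hconst : ∀ (g : G) (a b : T), lam (g • a) - lam a = lam (g • b) - lam b)
    (g h : G) (hc : ∀ x : T, g • h • x = h • g • x)
    (hgpos : ∀ a : T, lam a < lam (g • a))
    (hhpos : ∀ a : T, lam a < lam (h • a))
    (a : T) (ha : a ≤ g • a) : a ≤ h • a := by
  -- Step A: there is d ≤ a with d ≤ h • d
  obtain ⟨d, hda, hdha⟩ := hdir a (h • a)
  have hinv_le : h⁻¹ • d ≤ a := by
    have := (hord h⁻¹ d (h • a)).mp hdha
    simpa using this
  have hdh : d ≤ h • d := by
    rcases eq_or_ne (h⁻¹ • d) d with heq | hne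
    · exfalso
      have heq2 : h • h⁻¹ • d = h • d := by rw [heq]
      simp only [smul_inv_smul] at heq2
      have h2 := hhpos d
      rw [← heq2] at h2
      exact lt_irrefl _ h2
    · rcases (hchain a) hinv_le hda hne with h1 | h1
      · -- h⁻¹ • d ≤ d  ⇒  d ≤ h • d
        have := (hord h (h⁻¹ • d) d).mp h1
        simpa using this
      · -- d ≤ h⁻¹ • d ⇒ h • d ≤ d, contradicts χ(h) > 0
        exfalso
        have h2 : h • d ≤ d := by
          have := (hord h d (h⁻¹ • d)).mp h1
          simpa using this
        have := (hlam d (h • d) d h2 le_rfl).mp h2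
        exact absurd (hhpos d) (not_lt.mpr this)
  -- Step B: powers of g⁻¹ push a down
  have hga : g⁻¹ • a ≤ a := by
    have := (hord g⁻¹ a (g • a)).mp ha
    simpa using this
  have hdown : ∀ n : ℕ, (g⁻¹ ^ n) • a ≤ a := by
    intro n
    induction n with
    | zero => simp
    | succ n ih =>
      have : g⁻¹ • ((g⁻¹ ^ n) • a) ≤ g⁻¹ • a := by
        exact (hord g⁻¹ _ _).mp ih
      calc (g⁻¹ ^ (n+1)) • a = g⁻¹ • ((g⁻¹ ^ n) • a) := by
            rw [pow_succ', mul_smul]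
        _ ≤ g⁻¹ • a := this
        _ ≤ a := hga
  set c : ℝ := lam (g • a) - lam a with hcdef
  have hcpos : 0 < c := by have := hgpos a; simp [hcdef]; linarith
  have hinvlam : ∀ x : T, lam (g⁻¹ • x) = lam x - c := by
    intro x
    have := hconst g (g⁻¹ • x) a
    simp at this
    linarith
  have hlamiter : ∀ n : ℕ, lam ((g⁻¹ ^ n) • a) = lam a - n * c := by
    intro n
    induction n with
    | zero => simp
    | succ n ih =>
      have : (g⁻¹ ^ (n+1)) • a = g⁻¹ • ((g⁻¹ ^ n) • a) := by
        rw [pow_succ', mul_smul]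
      rw [this, hinvlam, ih]
      push_cast
      ring
  -- choose n with lam a - n*c < lam d
  obtain ⟨n, hn⟩ := exists_nat_gt ((lam a - lam d) / c)
  have hnlt : lam a - n * c < lam d := by
    have := (div_lt_iff₀ hcpos).mp hn
    linarith
  -- then (g⁻¹)^n • a ≤ d
  have hxd : (g⁻¹ ^ n) • a ≤ d := by
    have hxa := hdown n
    have hlx : lam ((g⁻¹ ^ n) • a) < lam d := by rw [hlamiter]; exact hnlt
    have hne : (g⁻¹ ^ n) • a ≠ d := fun e => by rw [e] at hlx; exact lt_irrefl _ hlx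
    rcases (hchain a) hxa hda hne with h1 | h1
    · exact h1
    · exfalso
      have := (hlam a d ((g⁻¹ ^ n) • a) hda hxa).mp h1
      exact absurd hlx (not_lt.mpr this)
  -- so a ≤ g^n • d
  have hae : a ≤ (g ^ n) • d := by
    have := (hord (g ^ n) _ _).mp hxd
    rwa [inv_pow, smul_inv_smul] at this
  -- Step C: g^n • d is still on the axis of h
  have haxis : ∀ m : ℕ, (g ^ m) • d ≤ h • (g ^ m) • d := by
    intro m
    induction m with
    | zero => simpa using hdh
    | succ m ih =>
      have h1 : g • ((g ^ m) • d) ≤ g • (h • (g ^ m) • d) := (hord g _ _).mp ih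
      rw [hc] at h1
      calc (g ^ (m+1)) • d = g • ((g ^ m) • d) := by rw [pow_succ', mul_smul]
        _ ≤ h • g • ((g ^ m) • d) := h1
        _ = h • (g ^ (m+1)) • d := by rw [pow_succ', mul_smul]
  -- Step D: a and h•a are both below h • (g^n • d), hence comparable
  set e : T := (g ^ n) • d with hedef
  have hee : e ≤ h • e := haxis n
  have h1 : a ≤ h • e := le_trans hae hee
  have h2 : h • a ≤ h • e := (hord h _ _).mp hae
  rcases eq_or_ne a (h • a) with heq | hne
  · exact le_of_eq heq
  · rcases (hchain (h • e)) (Set.mem_setOf.mpr h1) (Set.mem_setOf.mpr h2) hne with h3 | h3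
    · exact h3
    · exfalso
      have := (hlam (h • e) (h • a) a h2 h1).mp h3
      exact absurd (hhpos a) (not_lt.mpr this)

/-- Equality of axes under the positivity assumptions. -/
lemma axes_eq
    (hdir : ∀ a b : T, ∃ c, c ≤ a ∧ c ≤ b)
    (hchain : ∀ a : T, IsChain (· ≤ ·) {b : T | b ≤ a})
    (hlam : ∀ a b c : T, b ≤ a → c ≤ a → (b ≤ c ↔ lam b ≤ lam c))
    (hord : ∀ (g : G) (a b : T), a ≤ b ↔ g • a ≤ g • b)
    (hconst : ∀ (g : G) (a b : T), lam (g • a) - lam a = lam (g • b) - lam b)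
    (g h : G) (hc : ∀ x : T, g • h • x = h • g • x)
    (hgpos : ∀ a : T, lam a < lam (g • a))
    (hhpos : ∀ a : T, lam a < lam (h • a)) :
    {a : T | a ≤ g • a ∨ g • a ≤ a} = {a : T | a ≤ h • a ∨ h • a ≤ a} := by
  have key : ∀ (g h : G), (∀ x : T, g • h • x = h • g • x) →
      (∀ a : T, lam a < lam (g • a)) → (∀ a : T, lam a < lam (h • a)) →
      ∀ a : T, (a ≤ g • a ∨ g • a ≤ a) → (a ≤ h • a ∨ h • a ≤ a) := by
    intro g h hc hg hh a hax
    have hag : a ≤ g • a := by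
      rcases hax with h1 | h1
      · exact h1
      · exfalso
        have := (hlam a (g • a) a h1 le_rfl).mp h1
        exact absurd (hg a) (not_lt.mpr this)
    exact Or.inl (main_sub lam hdir hchain hlam hord hconst g h hc hg hh a hag)
  ext a
  constructor
  · exact key g h hc hgpos hhpos a
  · exact key h g (fun x => (hc x).symm) hhpos hgpos a

end aux

/-- Suppose a group `G` acts by automorphisms on a measured tree `(T, ≤, λ)` with
associated character `χ(g) = λ(g·a) - λ(a)`. If `g` and `h` commute and `h` is
hyperbolic (`χ(h) ≠ 0`), then the axis `A_h = {a | a ≤ h·a ∨ h·a ≤ a}` of `h` is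
invariant under `g`; and if moreover `χ(g) ≠ 0`, then `A_g = A_h`. -/
theorem stmt18 {G T : Type} [Group G] [PartialOrder T] [MulAction G T]
    (lam : T → ℝ)
    (hdir : ∀ a b : T, ∃ c, c ≤ a ∧ c ≤ b)
    (hchain : ∀ a : T, IsChain (· ≤ ·) {b : T | b ≤ a})
    (hlam : ∀ a b c : T, b ≤ a → c ≤ a → (b ≤ c ↔ lam b ≤ lam c))
    (hunb : ∀ (a : T) (r : ℝ), ∃ b, b ≤ a ∧ lam b < r)
    (hord : ∀ (g : G) (a b : T), a ≤ b ↔ g • a ≤ g • b)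
    (hconst : ∀ (g : G) (a b : T), lam (g • a) - lam a = lam (g • b) - lam b)
    (g h : G) (hgh : g * h = h * g)
    (a₀ : T) (hh : lam (h • a₀) ≠ lam a₀) :
    (∀ a : T, (a ≤ h • a ∨ h • a ≤ a) →
        (g • a ≤ h • (g • a) ∨ h • (g • a) ≤ g • a)) ∧
      (lam (g • a₀) ≠ lam a₀ →
        {a : T | a ≤ g • a ∨ g • a ≤ a} = {a : T | a ≤ h • a ∨ h • a ≤ a}) := by
  have hc : ∀ x : T, g • h • x = h • g • x := by
    intro x; rw [← mul_smul, ← mul_smul, hgh]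
  constructor
  · intro a hax
    rcases hax with h1 | h1
    · left
      have := (hord g a (h • a)).mp h1
      rwa [hc] at this
    · right
      have := (hord g (h • a) a).mp h1
      rwa [hc] at this
  · intro hg
    -- pointwise positivity in the right direction for g, g⁻¹, h, h⁻¹
    have hginv : ∀ a : T, lam (g⁻¹ • a) - lam a = -(lam (g • a₀) - lam a₀) := by
      intro a
      have := hconst g (g⁻¹ • a) a₀
      simp at this
      linarith
    have hhinv : ∀ a : T, lam (h⁻¹ • a) - lam a = -(lam (h • a₀) - lam a₀) := by
      intro a
      have := hconst h (h⁻¹ • a) a₀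
      simp at this
      linarith
    -- axis of k equals axis of k⁻¹
    have axinv : ∀ k : G, {a : T | a ≤ k • a ∨ k • a ≤ a}
        = {a : T | a ≤ k⁻¹ • a ∨ k⁻¹ • a ≤ a} := by
      intro k
      ext a
      have e1 : a ≤ k • a ↔ k⁻¹ • a ≤ a := by
        constructor
        · intro hx; have := (hord k⁻¹ a (k • a)).mp hx; simpa using this
        · intro hx; have := (hord k (k⁻¹ • a) a).mp hx; simpa using this
      have e2 : k • a ≤ a ↔ a ≤ k⁻¹ • a := by
        constructor
        · intro hx; have := (hord k⁻¹ (k • a) a).mp hx; simpa using this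
        · intro hx; have := (hord k a (k⁻¹ • a)).mp hx; simpa using this
      simp only [Set.mem_setOf_eq]
      rw [e1, e2]
      exact Or.comm
    have hcinv1 : ∀ x : T, g⁻¹ • h • x = h • g⁻¹ • x := by
      intro x
      have : g⁻¹ * h = h * g⁻¹ := (Commute.inv_left hgh).eq
      rw [← mul_smul, ← mul_smul, this]
    have hcinv2 : ∀ x : T, g • h⁻¹ • x = h⁻¹ • g • x := by
      intro x
      have : g * h⁻¹ = h⁻¹ * g := (Commute.inv_right hgh).eq
      rw [← mul_smul, ← mul_smul, this]
    have hcinv12 : ∀ x : T, g⁻¹ • h⁻¹ • x = h⁻¹ • g⁻¹ • x := by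
      intro x
      have : g⁻¹ * h⁻¹ = h⁻¹ * g⁻¹ := (Commute.inv_inv hgh).eq
      rw [← mul_smul, ← mul_smul, this]
    rcases lt_or_gt_of_ne hg with hgneg | hgpos' <;>
      rcases lt_or_gt_of_ne hh with hhneg | hhpos'
    · -- χ(g) < 0, χ(h) < 0 : use g⁻¹, h⁻¹
      have hp1 : ∀ a : T, lam a < lam (g⁻¹ • a) := by
        intro a; have := hginv a; nlinarith [hginv a]
      have hp2 : ∀ a : T, lam a < lam (h⁻¹ • a) := by
        intro a; have := hhinv a; nlinarith [hhinv a]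
      rw [axinv g, axinv h]
      exact axes_eq lam hdir hchain hlam hord hconst g⁻¹ h⁻¹ hcinv12 hp1 hp2
    · -- χ(g) < 0, χ(h) > 0 : use g⁻¹, h
      have hp1 : ∀ a : T, lam a < lam (g⁻¹ • a) := by
        intro a; nlinarith [hginv a]
      have hp2 : ∀ a : T, lam a < lam (h • a) := by
        intro a; have := hconst h a a₀; linarith
      rw [axinv g]
      exact axes_eq lam hdir hchain hlam hord hconst g⁻¹ h hcinv1 hp1 hp2
    · -- χ(g) > 0, χ(h) < 0 : use g, h⁻¹
      have hp1 : ∀ a : T, lam a < lam (g • a) := by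
        intro a; have := hconst g a a₀; linarith
      have hp2 : ∀ a : T, lam a < lam (h⁻¹ • a) := by
        intro a; nlinarith [hhinv a]
      rw [axinv h]
      exact axes_eq lam hdir hchain hlam hord hconst g h⁻¹ hcinv2 hp1 hp2
    · -- χ(g) > 0, χ(h) > 0
      have hp1 : ∀ a : T, lam a < lam (g • a) := by
        intro a; have := hconst g a a₀; linarith
      have hp2 : ∀ a : T, lam a < lam (h • a) := by
        intro a; have := hconst h a a₀; linarith
      exact axes_eq lam hdir hchain hlam hord hconst g h hc hp1 hp2
end
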